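/- Let α be a composition of n and P ∈ SET(α) with P ≠ S^{col}_α. Then there exists j ∈ {1,…,n−1} such that π_j^{RS*}(S^{col}_α) = S^{col}_α but π_j^{RS*}(P) ≠ P. -/

import Mathlib

open Classical

namespace ImmHecke

/-- A filling assigns a natural-number entry to each cell `(row, column)` (0-indexed);
row `0` is the bottom row.  Cells outside the diagram carry the junk value `0`. -/
abbrev Filling : Type := ℕ × ℕ → ℕ

/-- `c` is a cell of the diagram of the composition `α` (0-indexed rows and columns;
row `i` has `α_i` cells). -/
def IsCell (α : List ℕ) (c : ℕ × ℕ) : Prop :=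
  c.1 < α.length ∧ c.2 < α.getD c.1 0

/-- `α` is a composition of `n`: a list of positive integers summing to `n`. -/
def IsComposition (α : List ℕ) (n : ℕ) : Prop :=
  (∀ a ∈ α, 0 < a) ∧ α.sum = n

/-- `T` is a bijective filling of the diagram of `α` with the entries `1, …, n`
(where `n = α.sum`), and with value `0` off the diagram. -/
def IsStdFilling (α : List ℕ) (T : Filling) : Prop :=
  (∀ c, ¬ IsCell α c → T c = 0) ∧
  (∀ c, IsCell α c → 1 ≤ T c ∧ T c ≤ α.sum) ∧
  (∀ c c', IsCell α c → IsCell α c' → T c = T c' → c = c') ∧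
  (∀ m, 1 ≤ m → m ≤ α.sum → ∃ c, IsCell α c ∧ T c = m)

/-- A standard immaculate tableau of shape `α`: a bijective standard filling whose
first-column entries strictly increase bottom to top and whose rows strictly
increase left to right. -/
def IsSIT (α : List ℕ) (T : Filling) : Prop :=
  IsStdFilling α T ∧
  (∀ i i' : ℕ, IsCell α (i, 0) → IsCell α (i', 0) → i < i' → T (i, 0) < T (i', 0)) ∧
  (∀ i j j' : ℕ, IsCell α (i, j) → IsCell α (i, j') → j < j' → T (i, j) < T (i, j'))

/-- A standard extended tableau of shape `α`: a bijective standard filling whose rows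
strictly increase left to right and all of whose columns strictly increase
bottom to top.  Note `SET(α) ⊆ SIT(α)`. -/
def IsSET (α : List ℕ) (T : Filling) : Prop :=
  IsStdFilling α T ∧
  (∀ i j j' : ℕ, IsCell α (i, j) → IsCell α (i, j') → j < j' → T (i, j) < T (i, j')) ∧
  (∀ i i' j : ℕ, IsCell α (i, j) → IsCell α (i', j) → i < i' → T (i, j) < T (i', j))

/-- `SIT*(α)`: standard immaculate tableaux whose first column contains exactly the
entries `1, 2, …, ℓ(α)`. -/
def IsSITstar (α : List ℕ) (T : Filling) : Prop :=
  IsSIT α T ∧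
  (∀ i, IsCell α (i, 0) → 1 ≤ T (i, 0) ∧ T (i, 0) ≤ α.length) ∧
  (∀ m, 1 ≤ m → m ≤ α.length → ∃ i, IsCell α (i, 0) ∧ T (i, 0) = m)

/-- In `T`, the entry `m+1` lies in a row strictly above the row of `m`. -/
def SuccAbove (α : List ℕ) (T : Filling) (m : ℕ) : Prop :=
  ∃ c c', IsCell α c ∧ IsCell α c' ∧ T c = m ∧ T c' = m + 1 ∧ c.1 < c'.1

/-- In `T`, the entries `m` and `m+1` lie in the same row. -/
def SuccSameRow (α : List ℕ) (T : Filling) (m : ℕ) : Prop :=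
  ∃ c c', IsCell α c ∧ IsCell α c' ∧ T c = m ∧ T c' = m + 1 ∧ c.1 = c'.1

/-- In `T`, the entry `m+1` lies in a row strictly below the row of `m`. -/
def SuccBelow (α : List ℕ) (T : Filling) (m : ℕ) : Prop :=
  ∃ c c', IsCell α c ∧ IsCell α c' ∧ T c = m ∧ T c' = m + 1 ∧ c'.1 < c.1

/-- In `T`, the entries `m` and `m+1` are both in the first column. -/
def BothFirstColumn (α : List ℕ) (T : Filling) (m : ℕ) : Prop :=
  ∃ c c', IsCell α c ∧ IsCell α c' ∧ T c = m ∧ T c' = m + 1 ∧ c.2 = 0 ∧ c'.2 = 0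

/-- `s_i(T)`: exchange the entries `i` and `i+1` of `T`. -/
def swapEntries (i : ℕ) (T : Filling) : Filling :=
  fun c => if T c = i then i + 1 else if T c = i + 1 then i else T c

/-- The row-strict dual immaculate 0-Hecke operator `π_i^{RS*}` on `SIT(α) ∪ {0}`
(`0` is encoded as `none`): `π_i(T) = T` if `i+1` is strictly above `i`;
`π_i(T) = 0` if `i` and `i+1` are in the same row; `π_i(T) = s_i(T)` if `i+1` is
strictly below `i`. -/
noncomputable def piRS (α : List ℕ) (i : ℕ) : Option Filling → Option Filling
  | none => none
  | some T =>
    if SuccAbove α T i then some T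
    else if SuccSameRow α T i then none
    else some (swapEntries i T)

/-- The dual immaculate 0-Hecke operator `π_i^{S*}` on `SIT(α) ∪ {0}`:
`π_i(T) = T` if `i+1` is in a row weakly below `i`; `π_i(T) = 0` if `i` and `i+1`
are both in the first column; `π_i(T) = s_i(T)` if `i+1` is strictly above `i`
and `i, i+1` are not both in the first column. -/
noncomputable def piS (α : List ℕ) (i : ℕ) : Option Filling → Option Filling
  | none => none
  | some T =>
    if SuccSameRow α T i ∨ SuccBelow α T i then some T
    else if BothFirstColumn α T i then none
    else some (swapEntries i T)

/-- The 0-Hecke operator `π_i^{A*}` on `SIT(α)`: `π_i(T) = T` if `i+1` is strictly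
above `i` or in the same row as `i`; `π_i(T) = s_i(T)` if `i+1` is strictly below `i`. -/
noncomputable def piA (α : List ℕ) (i : ℕ) (T : Filling) : Filling :=
  if SuccBelow α T i then swapEntries i T else T

/-- The 0-Hecke operator `π_i^{Ā*}` on `SIT(α) ∪ {0}`: `π_i(T) = T` if `i+1` is
strictly below `i`; `π_i(T) = 0` if `i` and `i+1` are in the same row or both in
the first column; `π_i(T) = s_i(T)` if `i+1` is strictly above `i` and `i, i+1`
are not both in the first column. -/
noncomputable def piAbar (α : List ℕ) (i : ℕ) : Option Filling → Option Filling
  | none => none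
  | some T =>
    if SuccBelow α T i then some T
    else if SuccSameRow α T i ∨ BothFirstColumn α T i then none
    else some (swapEntries i T)

/-- `x` belongs to `SIT(α) ∪ {0}` (with `0 = none`). -/
def InSITZ (α : List ℕ) (x : Option Filling) : Prop :=
  ∀ T, x = some T → IsSIT α T

/-- Successively apply the operators `π_{i_1}^{RS*}, …, π_{i_r}^{RS*}` (the list `l = [i_1, …, i_r]`). -/
noncomputable def applySeqRS (α : List ℕ) (l : List ℕ) (x : Option Filling) : Option Filling :=
  l.foldl (fun y i => piRS α i y) x

/-- Successively apply the operators `π_{i_1}^{S*}, …, π_{i_r}^{S*}`. -/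
noncomputable def applySeqS (α : List ℕ) (l : List ℕ) (x : Option Filling) : Option Filling :=
  l.foldl (fun y i => piS α i y) x

/-- The relation `T₁ ≼ T₂` on `SIT(α)`: some sequence of operators `π_i^{RS*}`
(indices in `{1, …, n-1}`, possibly empty) sends `T₁` to `T₂`. -/
def preRS (α : List ℕ) (T₁ T₂ : Filling) : Prop :=
  ∃ l : List ℕ, (∀ i ∈ l, 1 ≤ i ∧ i ≤ α.sum - 1) ∧ applySeqRS α l (some T₁) = some T₂

/-- The one-line notation of `σ(T)`: read the entries of `T` from right to left in
each row, rows from top to bottom. -/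
def readingWord (α : List ℕ) (T : Filling) : List ℕ :=
  ((List.range α.length).reverse).flatMap
    (fun i => ((List.range (α.getD i 0)).map fun j => T (i, j)).reverse)

/-- The number of inversions of a word `w`: pairs of positions `p < q` with `w p > w q`. -/
def inversions (w : List ℕ) : ℕ :=
  ((Finset.range w.length ×ˢ Finset.range w.length).filter
    (fun pq : ℕ × ℕ => pq.1 < pq.2 ∧ w.getD pq.2 0 < w.getD pq.1 0)).card

/-- `S⁰_α`: first column contains `1, …, ℓ` bottom to top; the remaining cells are
filled with `ℓ+1, …, n` consecutively, reading rows from top to bottom and left to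
right within each row. -/
noncomputable def S0 (α : List ℕ) : Filling := fun c =>
  if IsCell α c then
    if c.2 = 0 then c.1 + 1
    else
      α.length + (((List.range α.length).filter fun r => c.1 < r).map fun r => α.getD r 0 - 1).sum + c.2
  else 0

/-- `S^{row}_α`: the row superstandard tableau, entries `1, …, n` placed consecutively
reading rows bottom to top, left to right within each row. -/
noncomputable def Srow (α : List ℕ) : Filling := fun c =>
  if IsCell α c then (α.take c.1).sum + c.2 + 1 else 0

/-- `S^{row*}_α`: first column contains `1, …, ℓ` bottom to top; the remaining cells
are filled with `ℓ+1, …, n` consecutively, reading rows bottom to top, left to right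
within each row. -/
noncomputable def SrowStar (α : List ℕ) : Filling := fun c =>
  if IsCell α c then
    if c.2 = 0 then c.1 + 1
    else α.length + ((List.range c.1).map fun r => α.getD r 0 - 1).sum + c.2
  else 0

/-- `S^{col}_α`: the column superstandard tableau, entries `1, …, n` placed
consecutively reading columns bottom to top, columns left to right. -/
noncomputable def Scol (α : List ℕ) : Filling := fun c =>
  if IsCell α c then
    ((List.range c.2).map fun j' =>
        ((List.range α.length).filter fun r => j' < α.getD r 0).length).sum
      + ((List.range c.1).filter fun r => c.2 < α.getD r 0).length + 1
  else 0

/-- The image of a basis element of `V_α` under the linearly extended operator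
`π_i^{RS*}` (the value `0` of the operator is interpreted as the zero vector). -/
noncomputable def piTargetRS (α : List ℕ) (i : ℕ) (T : {T : Filling // IsSIT α T}) :
    ({T : Filling // IsSIT α T} →₀ ℚ) :=
  match piRS α i (some T.val) with
  | none => 0
  | some T' => if h : IsSIT α T' then Finsupp.single ⟨T', h⟩ 1 else 0

/-- The operator `π_i^{RS*}` extended to a `ℚ`-linear endomorphism of the free
`ℚ`-vector space `V_α` with basis `SIT(α)`. -/
noncomputable def piRSLin (α : List ℕ) (i : ℕ) :
    ({T : Filling // IsSIT α T} →₀ ℚ) →ₗ[ℚ] ({T : Filling // IsSIT α T} →₀ ℚ) :=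
  Finsupp.lsum ℚ fun T => LinearMap.toSpanSingleton ℚ _ (piTargetRS α i T)

/-- The image of a basis element of `Z_α` under the linearly extended operator
`π_i^{RS*}`. -/
noncomputable def piTargetSET (α : List ℕ) (i : ℕ) (T : {T : Filling // IsSET α T}) :
    ({T : Filling // IsSET α T} →₀ ℚ) :=
  match piRS α i (some T.val) with
  | none => 0
  | some T' => if h : IsSET α T' then Finsupp.single ⟨T', h⟩ 1 else 0

/-- The operator `π_i^{RS*}` extended to a `ℚ`-linear endomorphism of the free
`ℚ`-vector space `Z_α` with basis `SET(α)`. -/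
noncomputable def piRSLinSET (α : List ℕ) (i : ℕ) :
    ({T : Filling // IsSET α T} →₀ ℚ) →ₗ[ℚ] ({T : Filling // IsSET α T} →₀ ℚ) :=
  Finsupp.lsum ℚ fun T => LinearMap.toSpanSingleton ℚ _ (piTargetSET α i T)

/-!
Let `c` be the cell of `S^col` holding the smallest entry `m` that `P` places elsewhere, say in
`d`. Smaller entries sit in the same cells of `P` and `S^col`, namely the cells preceding `c` in
column reading order. In the SET `P`, the left neighbour of `d` and the cells below it carry
smaller entries; this forces `d` into the column right after `c`, strictly below `c`. Hence the
left neighbour of `d` lies below `c` in its column, so `m - 1` sits directly below `m` in `S^col`,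
while in `P` the entry `m` is not above `m - 1`: the operator `π_{m-1}` fixes `S^col` but not `P`.
-/

lemma IsCell.of_le_snd {α : List ℕ} {i j j' : ℕ} (h : IsCell α (i, j)) (hj : j' ≤ j) :
    IsCell α (i, j') :=
  ⟨h.1, lt_of_le_of_lt hj h.2⟩

section Scol

variable {α : List ℕ}

def colHeight (α : List ℕ) (j : ℕ) : ℕ :=
  ((List.range α.length).filter fun r => j < α.getD r 0).length

def numCellsBeforeCol (α : List ℕ) (j : ℕ) : ℕ :=
  ((List.range j).map (colHeight α)).sum

def numCellsBelowInCol (α : List ℕ) (i j : ℕ) : ℕ :=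
  ((List.range i).filter fun r => j < α.getD r 0).length

lemma scol_eq {c : ℕ × ℕ} (hc : IsCell α c) :
    Scol α c = numCellsBeforeCol α c.2 + numCellsBelowInCol α c.1 c.2 + 1 := by
  simp only [Scol, if_pos hc]
  rfl

lemma numCellsBelow_lt {i i' j : ℕ} (h : j < α.getD i 0) (hii : i < i') :
    numCellsBelowInCol α i j < numCellsBelowInCol α i' j :=
  calc numCellsBelowInCol α i j < numCellsBelowInCol α (i + 1) j := by
        simpa [numCellsBelowInCol, List.range_succ] using h
    _ ≤ numCellsBelowInCol α i' j := ((List.range_sublist.2 hii).filter _).length_le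

lemma numCellsBeforeCol_add_colHeight_le {j j' : ℕ} (h : j < j') :
    numCellsBeforeCol α j + colHeight α j ≤ numCellsBeforeCol α j' := by
  induction j', h using Nat.le_induction with
  | base => simp [numCellsBeforeCol, List.range_succ]
  | succ k _ ih => simp only [numCellsBeforeCol, List.range_succ] at ih ⊢; simp; omega

lemma scol_lt_scol_iff {c c' : ℕ × ℕ} (hc : IsCell α c) (hc' : IsCell α c') :
    Scol α c < Scol α c' ↔ c.2 < c'.2 ∨ c.2 = c'.2 ∧ c.1 < c'.1 := by
  have lex_lt {c c' : ℕ × ℕ} (hc : IsCell α c) (hc' : IsCell α c')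
      (h : c.2 < c'.2 ∨ c.2 = c'.2 ∧ c.1 < c'.1) : Scol α c < Scol α c' := by
    rw [scol_eq hc, scol_eq hc']
    rcases h with h | ⟨h, h'⟩
    · have := numCellsBeforeCol_add_colHeight_le (α := α) h
      have : numCellsBelowInCol α c.1 c.2 < colHeight α c.2 := numCellsBelow_lt hc.2 hc.1
      omega
    · rw [← h]
      have := numCellsBelow_lt hc.2 h'
      omega
  refine ⟨fun h => ?_, lex_lt hc hc'⟩
  obtain ⟨i, j⟩ := c
  obtain ⟨i', j'⟩ := c'
  by_contra hn
  rcases (by omega : (i = i' ∧ j = j') ∨ j' < j ∨ j' = j ∧ i' < i) with ⟨rfl, rfl⟩ | h'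
  · exact lt_irrefl _ h
  · exact absurd (lex_lt hc' hc h') (by omega)

lemma scol_le_scol_iff {c c' : ℕ × ℕ} (hc : IsCell α c) (hc' : IsCell α c') :
    Scol α c ≤ Scol α c' ↔ c.2 < c'.2 ∨ c.2 = c'.2 ∧ c.1 ≤ c'.1 := by
  rw [← not_lt, scol_lt_scol_iff hc' hc]
  omega

lemma colHeight_cons (a : ℕ) (t : List ℕ) (j : ℕ) :
    colHeight (a :: t) j = (if j < a then 1 else 0) + colHeight t j := by
  simp only [colHeight, List.length_cons, List.range_succ_eq_map,
    ← List.countP_eq_length_filter, List.countP_cons, List.countP_map]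
  simp [Function.comp_def]
  split <;> omega

lemma numCellsBeforeCol_le_sum (k : ℕ) : numCellsBeforeCol α k ≤ α.sum := by
  induction α with
  | nil =>
    have : colHeight [] = fun _ => 0 := rfl
    simp [numCellsBeforeCol, this]
  | cons a t ih =>
    have hfirst : ∀ k, ((List.range k).map fun j => if j < a then 1 else 0).sum = min k a := by
      intro k
      induction k with
      | zero => simp
      | succ k ih =>
        simp only [List.range_succ, List.map_append, List.sum_append, ih]
        simp
        split <;> omega
    have hcol : colHeight (a :: t) = fun j => (if j < a then 1 else 0) + colHeight t j :=
      funext (colHeight_cons a t)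
    simp only [numCellsBeforeCol, hcol, List.sum_map_add, hfirst, List.sum_cons] at ih ⊢
    omega

lemma scol_le_sum {c : ℕ × ℕ} (hc : IsCell α c) : Scol α c ≤ α.sum := by
  have h1 : numCellsBelowInCol α c.1 c.2 < colHeight α c.2 := numCellsBelow_lt hc.2 hc.1
  have h2 := numCellsBeforeCol_add_colHeight_le (α := α) c.2.lt_add_one
  have h3 := numCellsBeforeCol_le_sum (α := α) (c.2 + 1)
  rw [scol_eq hc]
  omega

lemma sum_range_getD (α : List ℕ) : ∑ i ∈ Finset.range α.length, α.getD i 0 = α.sum := by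
  induction α with
  | nil => simp
  | cons a t ih =>
    rw [List.length_cons, Finset.sum_range_succ', List.sum_cons, ← ih, add_comm]
    simp

lemma isStdFilling_scol (α : List ℕ) : IsStdFilling α (Scol α) := by
  have hinj {c c' : ℕ × ℕ} (hc : IsCell α c) (hc' : IsCell α c')
      (h : Scol α c = Scol α c') : c = c' := by
    have := (scol_le_scol_iff hc hc').1 h.le
    have := (scol_le_scol_iff hc' hc).1 h.ge
    exact Prod.ext (by omega) (by omega)
  have hrange {c : ℕ × ℕ} (hc : IsCell α c) : 1 ≤ Scol α c ∧ Scol α c ≤ α.sum :=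
    ⟨by rw [scol_eq hc]; omega, scol_le_sum hc⟩
  refine ⟨fun c hc => if_neg hc, fun c => hrange, fun c c' => hinj, fun m h1 h2 => ?_⟩
  let cells := (Finset.range α.length).sigma fun i => Finset.range (α.getD i 0)
  have hcell {x : (_ : ℕ) × ℕ} (hx : x ∈ cells) : IsCell α (x.1, x.2) := by
    simpa [cells, IsCell] using hx
  obtain ⟨x, hx, hxm⟩ := Finset.surjOn_of_injOn_of_card_le (s := cells)
    (t := Finset.Icc 1 α.sum) (fun x => Scol α (x.1, x.2))
    (fun x hx => by simpa using hrange (hcell hx))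
    (fun x hx y hy h => by
      obtain ⟨hi, hj⟩ := Prod.mk.inj (hinj (hcell hx) (hcell hy) h)
      cases x; cases y; simp_all)
    (by simp only [cells, Finset.card_sigma, Finset.card_range, sum_range_getD, Nat.card_Icc]
        omega)
    (by simpa using And.intro h1 h2 : m ∈ Finset.Icc 1 α.sum)
  exact ⟨_, hcell hx, hxm⟩

end Scol

section Filling

variable {α : List ℕ} {T : Filling}

lemma IsStdFilling.one_le (hT : IsStdFilling α T) {c : ℕ × ℕ} (hc : IsCell α c) :
    1 ≤ T c :=
  (hT.2.1 c hc).1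

lemma IsStdFilling.le_sum (hT : IsStdFilling α T) {c : ℕ × ℕ} (hc : IsCell α c) :
    T c ≤ α.sum :=
  (hT.2.1 c hc).2

lemma IsStdFilling.inj (hT : IsStdFilling α T) {c c' : ℕ × ℕ} (hc : IsCell α c)
    (hc' : IsCell α c') (h : T c = T c') : c = c' :=
  hT.2.2.1 c c' hc hc' h

lemma IsStdFilling.exists_eq (hT : IsStdFilling α T) {m : ℕ} (h1 : 1 ≤ m) (h2 : m ≤ α.sum) :
    ∃ c, IsCell α c ∧ T c = m :=
  hT.2.2.2 m h1 h2

lemma IsStdFilling.exists_first_disagreement {T' : Filling} (hT : IsStdFilling α T)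
    (hT' : IsStdFilling α T') (hne : T ≠ T') :
    ∃ c, IsCell α c ∧ T c ≠ T' c ∧
      (∀ x, IsCell α x → T' x < T' c → T x = T' x) ∧
      (∀ x, IsCell α x → T x < T' c → T x = T' x) := by
  have hdiff : ∃ c, IsCell α c ∧ T c ≠ T' c := by
    by_contra! h
    refine hne (funext fun c => ?_)
    by_cases hc : IsCell α c
    · exact h c hc
    · rw [hT.1 c hc, hT'.1 c hc]
  obtain ⟨c, ⟨hc, hTc⟩, hmin⟩ :=
    (measure T').wf.has_min {c | IsCell α c ∧ T c ≠ T' c} hdiff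
  have below (x : ℕ × ℕ) (hx : IsCell α x) (hlt : T' x < T' c) : T x = T' x := by
    by_contra h
    exact hmin x ⟨hx, h⟩ hlt
  refine ⟨c, hc, hTc, below, fun x hx hlt => ?_⟩
  -- the cell where `T'` has the entry `T x` carries the same entry in `T`, so it is `x`
  obtain ⟨y, hy, hT'y⟩ := hT'.exists_eq (hT.one_le hx) (hT.le_sum hx)
  have hTy : T y = T x := (below y hy (hT'y ▸ hlt)).trans hT'y
  rw [← hT'y, hT.inj hy hx hTy]

lemma succAbove_iff (hT : IsStdFilling α T) {i : ℕ} {c d : ℕ × ℕ} (hc : IsCell α c)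
    (hd : IsCell α d) (hTc : T c = i) (hTd : T d = i + 1) : SuccAbove α T i ↔ c.1 < d.1 := by
  refine ⟨fun ⟨c', d', hc', hd', hTc', hTd', h⟩ => ?_,
    fun h => ⟨c, d, hc, hd, hTc, hTd, h⟩⟩
  rwa [hT.inj hc hc' (hTc.trans hTc'.symm), hT.inj hd hd' (hTd.trans hTd'.symm)]

lemma piRS_of_succAbove {i : ℕ} (h : SuccAbove α T i) : piRS α i (some T) = some T :=
  if_pos h

lemma piRS_ne_self_of_not_succAbove {i : ℕ} {c : ℕ × ℕ} (h : ¬ SuccAbove α T i)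
    (hc : T c = i) : piRS α i (some T) ≠ some T := by
  simp only [piRS, if_neg h]
  split_ifs
  · simp
  · intro hswap
    have := congrFun (Option.some.inj hswap) c
    simp [swapEntries, hc] at this

end Filling

/-- The left neighbour of `(p, q)` and the cells below it in its column are `P`-smaller. -/
lemma IsSET.snd_eq_succ_and_fst_lt {α : List ℕ} {P : Filling} (hP : IsSET α P)
    {a b p q : ℕ} (hc : IsCell α (a, b)) (hd : IsCell α (p, q))
    (hcd : Scol α (a, b) < Scol α (p, q))
    (hbefore : ∀ x, IsCell α x → P x < P (p, q) → Scol α x < Scol α (a, b)) :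
    q = b + 1 ∧ p < a := by
  rcases (scol_lt_scol_iff hc hd).1 hcd with hq | ⟨rfl, hp⟩
  · have hleft := hd.of_le_snd (Nat.sub_le q 1)
    have := (scol_lt_scol_iff hleft hc).1 (hbefore _ hleft (hP.2.1 p (q - 1) q hleft hd (by omega)))
    omega
  · exact absurd (hbefore _ hc (hP.2.2 a p b hc hd hp)) (lt_irrefl _)

theorem Scol_fixed_not_P (n : ℕ) (α : List ℕ) (hα : IsComposition α n)
    (P : Filling) (hP : IsSET α P) (hne : P ≠ Scol α) :
    ∃ j, 1 ≤ j ∧ j ≤ n - 1 ∧ piRS α j (some (Scol α)) = some (Scol α) ∧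
      piRS α j (some P) ≠ some P := by
  obtain ⟨-, rfl⟩ := hα
  have hS := isStdFilling_scol α
  obtain ⟨⟨a, b⟩, hc, hPc, hagree, hagree'⟩ := hP.1.exists_first_disagreement hS hne
  have hm_le := hS.le_sum hc
  generalize hm : Scol α (a, b) = m at *
  obtain ⟨⟨p, q⟩, hd, hPd⟩ := hP.1.exists_eq (hm ▸ hS.one_le hc) hm_le
  have hcd : m < Scol α (p, q) := by
    rcases lt_trichotomy (Scol α (p, q)) m with h | h | h
    · exact absurd (hagree _ hd h) (by omega)
    · exact absurd (hS.inj hd hc (h.trans hm.symm) ▸ hPd) hPc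
    · exact h
  have hbefore (x : ℕ × ℕ) (hx : IsCell α x) (h : P x < P (p, q)) : Scol α x < m :=
    hagree' x hx (hPd ▸ h) ▸ hPd ▸ h
  obtain ⟨rfl, hpa⟩ := hP.snd_eq_succ_and_fst_lt hc hd (hm ▸ hcd) (hm ▸ hbefore)
  have hleft := hd.of_le_snd b.le_succ
  have hleft_lt := hbefore _ hleft (hP.2.1 p b (b + 1) hleft hd b.lt_succ_self)
  have hleft_pos := hS.one_le hleft
  obtain ⟨⟨a', b'⟩, hc', hSc'⟩ := hS.exists_eq (m := m - 1) (by omega) (by omega)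
  have hleft_le_c' := (scol_le_scol_iff hleft hc').1 (by omega)
  have hc'_lt_c := (scol_lt_scol_iff hc' hc).1 (by omega)
  have hPc' : P (a', b') = m - 1 := hagree _ hc' (by omega) ▸ hSc'
  refine ⟨m - 1, by omega, by omega,
    piRS_of_succAbove ((succAbove_iff hS hc' hc hSc' (by omega)).2 (by omega)),
    piRS_ne_self_of_not_succAbove (fun h => ?_) hPc'⟩
  have := (succAbove_iff hP.1 hc' hd hPc' (by omega)).1 h
  omega

end ImmHecke
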